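/- For the coproduct r on 'f with r(θ_i)=θ_i⊗1+1⊗θ_i (an algebra map into the twisted tensor product) and the twisted flip ρ(x⊗y)=t^{⟨|y|,|x|⟩−⟨|x|,|y|⟩} y⊗x, one has r(σ(x)) = (σ⊗σ)(ρ(r(x))) for all x ∈ 'f. -/

import Mathlib

/-!
Write `Φ = (σ ⊗ σ) ∘ ρ`. Both `r ∘ σ` and `Φ ∘ r` are linear, so it suffices to compare them
on words, by induction on the length. Since `σ(θᵢ w) = t^{⟨|w|,i⟩-⟨i,|w|⟩} σ(w) θᵢ` and `r` is
multiplicative, the induction step reduces to two facts: `Φ` fixes `θᵢ ⊗ 1 + 1 ⊗ θᵢ`, and `Φ`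
is a twisted anti-homomorphism of the twisted tensor product,
`Φ(XY) = t^{⟨|Y|,|X|⟩-⟨|X|,|Y|⟩} Φ(Y) Φ(X)` for homogeneous `X`, `Y`.
On basis tensors the latter is a comparison of the exponents of `v` and `t`, using the closed
form `σ(w) = t^{e(w)} w^{rev}`, where `e(uw) = e(u) + e(w) + ⟨|w|,|u|⟩ - ⟨|u|,|w|⟩`.
-/

noncomputable section

def wdeg {I : Type*} [DecidableEq I] (w : FreeMonoid I) : I →₀ ℕ :=
  (w.toList.map fun i => Finsupp.single i 1).sum

def angN {I : Type*} (form : I → I → ℤ) (ν μ : I →₀ ℕ) : ℤ :=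
  ν.sum fun i a => μ.sum fun j b => (a : ℤ) * (b : ℤ) * form i j

def dotN {I : Type*} (form : I → I → ℤ) (ν μ : I →₀ ℕ) : ℤ :=
  angN form ν μ + angN form μ ν

abbrev FreeAlg (K : Type*) [Field K] (I : Type*) : Type _ :=
  MonoidAlgebra K (FreeMonoid I)

/-- `'f ⊗ 'f`, realized with basis the pairs of words. -/
abbrev FreeAlg2 (K : Type*) [Field K] (I : Type*) : Type _ :=
  (FreeMonoid I × FreeMonoid I) →₀ K

def theta {K : Type*} [Field K] {I : Type*} (i : I) : FreeAlg K I :=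
  MonoidAlgebra.of K (FreeMonoid I) (FreeMonoid.of i)

def IsHomog {K : Type*} [Field K] {I : Type*} [DecidableEq I]
    (x : FreeAlg K I) (ν : I →₀ ℕ) : Prop :=
  ∀ w ∈ x.coeff.support, wdeg w = ν

/-- The twisted multiplication on `'f ⊗ 'f`:
`(x₁⊗x₂)(y₁⊗y₂) = v^{|y₁|·|x₂|} t^{⟨|y₁|,|x₂|⟩−⟨|x₂|,|y₁|⟩} x₁y₁ ⊗ x₂y₂`. -/
def tmul {I : Type*} [DecidableEq I] {K : Type*} [Field K] (v t : Kˣ) (form : I → I → ℤ)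
    (x y : FreeAlg2 K I) : FreeAlg2 K I :=
  x.sum fun p a => y.sum fun q b =>
    Finsupp.single (p.1 * q.1, p.2 * q.2)
      (a * b *
        ((v ^ dotN form (wdeg q.1) (wdeg p.2) *
          t ^ (angN form (wdeg q.1) (wdeg p.2) - angN form (wdeg p.2) (wdeg q.1)) : Kˣ) : K))

/-- The twisted flip `ρ(x⊗y) = t^{⟨|y|,|x|⟩−⟨|x|,|y|⟩} y⊗x`. -/
def twflip {I : Type*} [DecidableEq I] {K : Type*} [Field K] (t : Kˣ) (form : I → I → ℤ)
    (z : FreeAlg2 K I) : FreeAlg2 K I :=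
  z.sum fun p a =>
    Finsupp.single (p.2, p.1)
      (a * ((t ^ (angN form (wdeg p.2) (wdeg p.1) - angN form (wdeg p.1) (wdeg p.2)) : Kˣ) : K))

/-- `x ⊗ y` as an element of `FreeAlg2`. -/
def outer {I : Type*} {K : Type*} [Field K] (x y : FreeAlg K I) : FreeAlg2 K I :=
  x.coeff.sum fun w c => y.coeff.sum fun u d => Finsupp.single (w, u) (c * d)

/-- `σ ⊗ σ` on `'f ⊗ 'f`. -/
def tensorSigma {I : Type*} {K : Type*} [Field K]
    (σ : FreeAlg K I →ₗ[K] FreeAlg K I) (z : FreeAlg2 K I) : FreeAlg2 K I :=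
  z.sum fun p a => a • outer (σ (MonoidAlgebra.single p.1 1)) (σ (MonoidAlgebra.single p.2 1))

@[simp]
lemma FreeMonoid.reverse_one {α : Type*} : (1 : FreeMonoid α).reverse = 1 := rfl

section Degree

variable {I : Type*}

@[simp]
lemma wdeg_one [DecidableEq I] : wdeg (1 : FreeMonoid I) = 0 := rfl

@[simp]
lemma wdeg_of [DecidableEq I] (i : I) : wdeg (FreeMonoid.of i) = Finsupp.single i 1 := by
  simp [wdeg]

@[simp]
lemma wdeg_mul [DecidableEq I] (w u : FreeMonoid I) : wdeg (w * u) = wdeg w + wdeg u := by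
  simp [wdeg, FreeMonoid.toList_mul]

@[simp]
lemma wdeg_reverse [DecidableEq I] (w : FreeMonoid I) : wdeg w.reverse = wdeg w := by
  change ((w.toList.reverse).map _).sum = _
  rw [List.map_reverse, List.sum_reverse]
  rfl

variable (form : I → I → ℤ)

@[simp]
lemma angN_zero_left (μ : I →₀ ℕ) : angN form 0 μ = 0 := by simp [angN]

@[simp]
lemma angN_zero_right (ν : I →₀ ℕ) : angN form ν 0 = 0 := by simp [angN]

lemma angN_add_left (ν ν' μ : I →₀ ℕ) :
    angN form (ν + ν') μ = angN form ν μ + angN form ν' μ := by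
  unfold angN
  rw [Finsupp.sum_add_index' (by simp) fun i a a' => ?_]
  rw [← Finsupp.sum_add]
  congr 1; ext j b; push_cast; ring

lemma angN_add_right (ν μ μ' : I →₀ ℕ) :
    angN form ν (μ + μ') = angN form ν μ + angN form ν μ' := by
  unfold angN
  rw [← Finsupp.sum_add]
  congr 1; ext i a
  rw [Finsupp.sum_add_index' (by simp) fun j b b' => by push_cast; ring]

end Degree

section TwistedTensor

variable {I : Type*} [DecidableEq I] {K : Type*} [Field K] (v t : Kˣ) (form : I → I → ℤ)

lemma tmul_single_single (p q : FreeMonoid I × FreeMonoid I) (a b : K) :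
    tmul v t form (Finsupp.single p a) (Finsupp.single q b) =
      Finsupp.single (p.1 * q.1, p.2 * q.2)
        (a * b * ((v ^ dotN form (wdeg q.1) (wdeg p.2) *
          t ^ (angN form (wdeg q.1) (wdeg p.2) - angN form (wdeg p.2) (wdeg q.1)) : Kˣ) : K)) := by
  unfold tmul
  rw [Finsupp.sum_single_index (by simp), Finsupp.sum_single_index (by simp)]

def tmulBilin : FreeAlg2 K I →ₗ[K] FreeAlg2 K I →ₗ[K] FreeAlg2 K I :=
  LinearMap.mk₂ K (tmul v t form)
    (fun x x' y => by
      unfold tmul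
      rw [Finsupp.sum_add_index' (by simp) fun p a a' => ?_]
      rw [← Finsupp.sum_add]
      exact Finsupp.sum_congr fun q _ => by rw [add_mul, add_mul, Finsupp.single_add])
    (fun c x y => by
      unfold tmul
      rw [Finsupp.sum_smul_index (by simp), Finsupp.smul_sum]
      refine Finsupp.sum_congr fun p _ => ?_
      rw [Finsupp.smul_sum]
      exact Finsupp.sum_congr fun q _ => by rw [Finsupp.smul_single, smul_eq_mul, mul_assoc,
        mul_assoc, mul_assoc])
    (fun x y y' => by
      unfold tmul
      rw [← Finsupp.sum_add]
      refine Finsupp.sum_congr fun p _ => ?_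
      rw [Finsupp.sum_add_index' (by simp) fun q b b' => by
        rw [mul_add, add_mul, Finsupp.single_add]])
    (fun c x y => by
      unfold tmul
      rw [Finsupp.smul_sum]
      refine Finsupp.sum_congr fun p _ => ?_
      rw [Finsupp.sum_smul_index (by simp), Finsupp.smul_sum]
      exact Finsupp.sum_congr fun q _ => by
        rw [Finsupp.smul_single, smul_eq_mul]; congr 1; ring)

@[simp]
lemma tmulBilin_apply (x y : FreeAlg2 K I) : tmulBilin v t form x y = tmul v t form x y := rfl

def twflipLinear : FreeAlg2 K I →ₗ[K] FreeAlg2 K I where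
  toFun := twflip t form
  map_add' z z' := by
    unfold twflip
    exact Finsupp.sum_add_index' (by simp) fun p a a' => by rw [add_mul, Finsupp.single_add]
  map_smul' c z := by
    unfold twflip
    rw [Finsupp.sum_smul_index (by simp), Finsupp.smul_sum]
    exact Finsupp.sum_congr fun p _ => by
      rw [Finsupp.smul_single, smul_eq_mul, mul_assoc, RingHom.id_apply]

lemma twflip_single (p : FreeMonoid I × FreeMonoid I) (a : K) :
    twflip t form (Finsupp.single p a) =
      Finsupp.single (p.2, p.1)
        (a * ((t ^ (angN form (wdeg p.2) (wdeg p.1) - angN form (wdeg p.1) (wdeg p.2)) :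
          Kˣ) : K)) :=
  Finsupp.sum_single_index (by simp)

end TwistedTensor

section SigmaTensorSigma

variable {I : Type*} {K : Type*} [Field K] (σ : FreeAlg K I →ₗ[K] FreeAlg K I)

lemma outer_single_single (w u : FreeMonoid I) (c d : K) :
    outer (MonoidAlgebra.single w c) (MonoidAlgebra.single u d) =
      Finsupp.single (w, u) (c * d) := by
  simp only [outer, MonoidAlgebra.coeff_single, Finsupp.sum_single_index, zero_mul, mul_zero,
    Finsupp.single_zero]

def tensorSigmaLinear : FreeAlg2 K I →ₗ[K] FreeAlg2 K I where
  toFun := tensorSigma σ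
  map_add' z z' := Finsupp.sum_add_index' (by simp) fun p a a' => add_smul _ _ _
  map_smul' c z := by
    unfold tensorSigma
    rw [Finsupp.sum_smul_index (by simp), Finsupp.smul_sum]
    exact Finsupp.sum_congr fun p _ => mul_smul _ _ _

lemma tensorSigma_single (p : FreeMonoid I × FreeMonoid I) (a : K) :
    tensorSigma σ (Finsupp.single p a) =
      a • outer (σ (MonoidAlgebra.single p.1 1)) (σ (MonoidAlgebra.single p.2 1)) :=
  Finsupp.sum_single_index (by simp)

end SigmaTensorSigma

section Homogeneous

variable {I : Type*} [DecidableEq I] {K : Type*} [Field K] {v t : Kˣ} {form : I → I → ℤ}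

variable (K) in
def homogTensors (ν : I →₀ ℕ) : Submodule K (FreeAlg2 K I) :=
  Finsupp.supported K K {p | wdeg p.1 + wdeg p.2 = ν}

lemma single_mem_homogTensors (p : FreeMonoid I × FreeMonoid I) (a : K) :
    Finsupp.single p a ∈ homogTensors K (wdeg p.1 + wdeg p.2) :=
  Finsupp.single_mem_supported K a rfl

lemma tmul_mem_homogTensors {x y : FreeAlg2 K I} {ν μ : I →₀ ℕ}
    (hx : x ∈ homogTensors K ν) (hy : y ∈ homogTensors K μ) :
    tmul v t form x y ∈ homogTensors K (ν + μ) := by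
  refine Submodule.finsuppSum_mem _ _ _ _ fun p hp =>
    Submodule.finsuppSum_mem _ _ _ _ fun q hq => ?_
  have hp' : wdeg p.1 + wdeg p.2 = ν := (Finsupp.mem_supported K x).1 hx (by simpa using hp)
  have hq' : wdeg q.1 + wdeg q.2 = μ := (Finsupp.mem_supported K y).1 hy (by simpa using hq)
  refine Finsupp.single_mem_supported K _ ?_
  simp only [Set.mem_ofPred_eq, wdeg_mul, ← hp', ← hq']
  abel

lemma primitive_mem_homogTensors (i : I) :
    (Finsupp.single (FreeMonoid.of i, 1) 1 + Finsupp.single (1, FreeMonoid.of i) 1 :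
      FreeAlg2 K I) ∈ homogTensors K (Finsupp.single i 1) := by
  refine Submodule.add_mem _ ?_ ?_
  · simpa using single_mem_homogTensors (K := K) (FreeMonoid.of i, 1) 1
  · simpa using single_mem_homogTensors (K := K) (1, FreeMonoid.of i) 1

end Homogeneous

lemma single_of_mul {I K : Type*} [Field K] (i : I) (w : FreeMonoid I) :
    MonoidAlgebra.single (FreeMonoid.of i * w) (1 : K) = theta i * MonoidAlgebra.single w 1 := by
  rw [theta, MonoidAlgebra.of_apply, MonoidAlgebra.single_mul_single, one_mul]

section Sigma

variable {I : Type*} [DecidableEq I] {K : Type*} [Field K] (t : Kˣ) (form : I → I → ℤ)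

def sigmaExp (w : FreeMonoid I) : ℤ :=
  FreeMonoid.recOn w 0 fun i w e =>
    e + (angN form (wdeg w) (Finsupp.single i 1) - angN form (Finsupp.single i 1) (wdeg w))

@[simp]
lemma sigmaExp_one : sigmaExp form 1 = 0 := rfl

lemma sigmaExp_of_mul (i : I) (w : FreeMonoid I) :
    sigmaExp form (FreeMonoid.of i * w) = sigmaExp form w +
      (angN form (wdeg w) (Finsupp.single i 1) - angN form (Finsupp.single i 1) (wdeg w)) :=
  rfl

@[simp]
lemma sigmaExp_of (i : I) : sigmaExp form (FreeMonoid.of i) = 0 := by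
  simpa using sigmaExp_of_mul form i 1

lemma sigmaExp_mul (u w : FreeMonoid I) :
    sigmaExp form (u * w) = sigmaExp form u + sigmaExp form w +
      (angN form (wdeg w) (wdeg u) - angN form (wdeg u) (wdeg w)) := by
  induction u using FreeMonoid.inductionOn' with
  | one => simp
  | of_mul i u ih =>
    rw [mul_assoc, sigmaExp_of_mul, sigmaExp_of_mul, ih]
    simp only [wdeg_mul, wdeg_of, angN_add_left, angN_add_right]
    ring

lemma isHomog_single (w : FreeMonoid I) (c : K) :
    IsHomog (MonoidAlgebra.single w c) (wdeg w) := by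
  intro u hu
  rw [Finset.mem_singleton.mp (Finsupp.support_single_subset hu)]

lemma isHomog_theta (i : I) : IsHomog (theta i : FreeAlg K I) (Finsupp.single i 1) := by
  rw [← wdeg_of]
  exact isHomog_single (FreeMonoid.of i) 1

lemma sigma_single (σ : FreeAlg K I →ₗ[K] FreeAlg K I) (hσone : σ 1 = 1)
    (hσtheta : ∀ i : I, σ (theta i) = theta i)
    (hσmul : ∀ (x y : FreeAlg K I) (ν μ : I →₀ ℕ), IsHomog x ν → IsHomog y μ →
      σ (x * y) = ((t ^ (angN form μ ν - angN form ν μ) : Kˣ) : K) • (σ y * σ x))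
    (w : FreeMonoid I) :
    σ (MonoidAlgebra.single w 1) =
      ((t ^ sigmaExp form w : Kˣ) : K) • MonoidAlgebra.single w.reverse 1 := by
  induction w using FreeMonoid.inductionOn' with
  | one =>
    rw [← MonoidAlgebra.one_def, hσone, sigmaExp_one, zpow_zero, Units.val_one, one_smul]
    rfl
  | of_mul i w ih =>
    rw [single_of_mul, hσmul _ _ _ _ (isHomog_theta i) (isHomog_single w 1), ih, hσtheta,
      smul_mul_assoc, theta, MonoidAlgebra.of_apply, MonoidAlgebra.single_mul_single, mul_one,
      smul_smul, ← Units.val_mul, ← zpow_add, sigmaExp_of_mul, FreeMonoid.reverse_mul,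
      FreeMonoid.reverse_of, add_comm]

end Sigma

section SigmaFlip

variable {I : Type*} [DecidableEq I] {K : Type*} [Field K] (v t : Kˣ) (form : I → I → ℤ)
  (σ : FreeAlg K I →ₗ[K] FreeAlg K I)

def sigmaFlip : FreeAlg2 K I →ₗ[K] FreeAlg2 K I :=
  tensorSigmaLinear σ ∘ₗ twflipLinear t form

lemma sigmaFlip_apply (z : FreeAlg2 K I) :
    sigmaFlip t form σ z = tensorSigma σ (twflip t form z) := rfl

variable {v t form σ}

lemma sigmaFlip_single
    (hσ : ∀ w, σ (MonoidAlgebra.single w 1) =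
      ((t ^ sigmaExp form w : Kˣ) : K) • MonoidAlgebra.single w.reverse 1)
    (p : FreeMonoid I × FreeMonoid I) (a : K) :
    sigmaFlip t form σ (Finsupp.single p a) =
      Finsupp.single (p.2.reverse, p.1.reverse)
        (a * ((t ^ (angN form (wdeg p.2) (wdeg p.1) - angN form (wdeg p.1) (wdeg p.2) +
          sigmaExp form p.2 + sigmaExp form p.1) : Kˣ) : K)) := by
  rw [sigmaFlip_apply, twflip_single, tensorSigma_single, hσ, hσ, MonoidAlgebra.smul_single',
    MonoidAlgebra.smul_single', mul_one, mul_one, outer_single_single, Finsupp.smul_single,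
    smul_eq_mul, zpow_add, zpow_add, Units.val_mul, Units.val_mul]
  congr 1
  ring

lemma sigmaFlip_tmul_single_single
    (hσ : ∀ w, σ (MonoidAlgebra.single w 1) =
      ((t ^ sigmaExp form w : Kˣ) : K) • MonoidAlgebra.single w.reverse 1)
    (p q : FreeMonoid I × FreeMonoid I) (a b : K) :
    sigmaFlip t form σ (tmul v t form (Finsupp.single p a) (Finsupp.single q b)) =
      ((t ^ (angN form (wdeg q.1 + wdeg q.2) (wdeg p.1 + wdeg p.2) -
        angN form (wdeg p.1 + wdeg p.2) (wdeg q.1 + wdeg q.2)) : Kˣ) : K) •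
        tmul v t form (sigmaFlip t form σ (Finsupp.single q b))
          (sigmaFlip t form σ (Finsupp.single p a)) := by
  simp only [tmul_single_single, sigmaFlip_single hσ, Finsupp.smul_single,
    FreeMonoid.reverse_mul, wdeg_mul, wdeg_reverse, sigmaExp_mul]
  congr 1
  simp only [dotN, smul_eq_mul, Units.val_mul, Units.val_zpow_eq_zpow_val, angN_add_left,
    angN_add_right, zpow_add₀ (Units.ne_zero _), zpow_sub₀ (Units.ne_zero _)]
  ring

theorem sigmaFlip_tmul
    (hσ : ∀ w, σ (MonoidAlgebra.single w 1) =
      ((t ^ sigmaExp form w : Kˣ) : K) • MonoidAlgebra.single w.reverse 1)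
    {x y : FreeAlg2 K I} {ν μ : I →₀ ℕ}
    (hx : x ∈ homogTensors K ν) (hy : y ∈ homogTensors K μ) :
    sigmaFlip t form σ (tmul v t form x y) =
      ((t ^ (angN form μ ν - angN form ν μ) : Kˣ) : K) •
        tmul v t form (sigmaFlip t form σ y) (sigmaFlip t form σ x) := by
  calc sigmaFlip t form σ (tmul v t form x y)
      = ∑ p ∈ x.support, ∑ q ∈ y.support, sigmaFlip t form σ
          (tmul v t form (Finsupp.single p (x p)) (Finsupp.single q (y q))) := by
        conv_lhs => rw [← x.sum_single, ← y.sum_single]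
        simp only [Finsupp.sum, ← tmulBilin_apply, map_sum, LinearMap.sum_apply]
        exact Finset.sum_comm
    _ = ∑ p ∈ x.support, ∑ q ∈ y.support, ((t ^ (angN form μ ν - angN form ν μ) : Kˣ) : K) •
          tmul v t form (sigmaFlip t form σ (Finsupp.single q (y q)))
            (sigmaFlip t form σ (Finsupp.single p (x p))) := by
        refine Finset.sum_congr rfl fun p hp => Finset.sum_congr rfl fun q hq => ?_
        rw [sigmaFlip_tmul_single_single hσ, (Finsupp.mem_supported K x).1 hx hp,
          (Finsupp.mem_supported K y).1 hy hq]
    _ = _ := by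
        conv_rhs => rw [← x.sum_single, ← y.sum_single]
        simp only [Finsupp.sum, ← tmulBilin_apply, map_sum, LinearMap.sum_apply, Finset.smul_sum]

lemma sigmaFlip_primitive
    (hσ : ∀ w, σ (MonoidAlgebra.single w 1) =
      ((t ^ sigmaExp form w : Kˣ) : K) • MonoidAlgebra.single w.reverse 1) (i : I) :
    sigmaFlip t form σ
        (Finsupp.single (FreeMonoid.of i, 1) 1 + Finsupp.single (1, FreeMonoid.of i) 1) =
      Finsupp.single (FreeMonoid.of i, 1) 1 + Finsupp.single (1, FreeMonoid.of i) 1 := by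
  rw [map_add, sigmaFlip_single hσ, sigmaFlip_single hσ, add_comm]
  simp

end SigmaFlip

lemma r_single_mem_homogTensors {I : Type*} [DecidableEq I] {K : Type*} [Field K] {v t : Kˣ}
    {form : I → I → ℤ}
    (r : FreeAlg K I →ₗ[K] FreeAlg2 K I)
    (hrone : r 1 = Finsupp.single (1, 1) 1)
    (hrtheta : ∀ i : I, r (theta i) =
      Finsupp.single (FreeMonoid.of i, 1) 1 + Finsupp.single (1, FreeMonoid.of i) 1)
    (hrmul : ∀ x y : FreeAlg K I, r (x * y) = tmul v t form (r x) (r y)) (w : FreeMonoid I) :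
    r (MonoidAlgebra.single w 1) ∈ homogTensors K (wdeg w) := by
  induction w using FreeMonoid.inductionOn' with
  | one =>
    rw [← MonoidAlgebra.one_def, hrone]
    exact wdeg_one (I := I) ▸ single_mem_homogTensors (1, 1) 1
  | of_mul i w ih =>
    rw [single_of_mul, hrmul, hrtheta, wdeg_mul, wdeg_of]
    exact tmul_mem_homogTensors (primitive_mem_homogTensors i) ih

theorem r_sigma_general {I : Type*} [DecidableEq I] {K : Type*} [Field K]
    (v t : Kˣ) (form : I → I → ℤ)
    (σ : FreeAlg K I →ₗ[K] FreeAlg K I)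
    (hσone : σ 1 = 1)
    (hσtheta : ∀ i : I, σ (theta i) = theta i)
    (hσmul : ∀ (x y : FreeAlg K I) (ν μ : I →₀ ℕ), IsHomog x ν → IsHomog y μ →
      σ (x * y) = ((t ^ (angN form μ ν - angN form ν μ) : Kˣ) : K) • (σ y * σ x))
    (r : FreeAlg K I →ₗ[K] FreeAlg2 K I)
    (hrone : r 1 = Finsupp.single (1, 1) 1)
    (hrtheta : ∀ i : I, r (theta i) =
      Finsupp.single (FreeMonoid.of i, 1) 1 + Finsupp.single (1, FreeMonoid.of i) 1)
    (hrmul : ∀ x y : FreeAlg K I, r (x * y) = tmul v t form (r x) (r y)) :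
    ∀ x : FreeAlg K I, r (σ x) = tensorSigma σ (twflip t form (r x)) := by
  have hσ := sigma_single t form σ hσone hσtheta hσmul
  suffices r ∘ₗ σ = sigmaFlip t form σ ∘ₗ r from LinearMap.congr_fun this
  refine MonoidAlgebra.lhom_ext' fun w => LinearMap.ext_ring ?_
  simp only [LinearMap.comp_apply, MonoidAlgebra.lsingle_apply]
  induction w using FreeMonoid.inductionOn' with
  | one => simp [← MonoidAlgebra.one_def, hσone, hrone, sigmaFlip_single hσ]
  | of_mul i w ih =>
    rw [single_of_mul, hσmul _ _ _ _ (isHomog_theta i) (isHomog_single w 1), hσtheta, map_smul,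
      hrmul, ih, hrmul, hrtheta,
      sigmaFlip_tmul hσ (primitive_mem_homogTensors i)
        (r_single_mem_homogTensors r hrone hrtheta hrmul w),
      sigmaFlip_primitive hσ]

/-- `r(σ(x)) = (σ⊗σ)(ρ(r(x)))` for all `x ∈ 'f`, where `r` is the algebra
map into the twisted tensor product with `r(θ_i) = θ_i⊗1 + 1⊗θ_i`. -/
theorem r_sigma {I : Type*} [Fintype I] [DecidableEq I] {K : Type*} [Field K]
    (v t : Kˣ) (form : I → I → ℤ)
    (σ : FreeAlg K I →ₗ[K] FreeAlg K I)
    (hσone : σ 1 = 1)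
    (hσtheta : ∀ i : I, σ (theta i) = theta i)
    (hσmul : ∀ (x y : FreeAlg K I) (ν μ : I →₀ ℕ), IsHomog x ν → IsHomog y μ →
      σ (x * y) = ((t ^ (angN form μ ν - angN form ν μ) : Kˣ) : K) • (σ y * σ x))
    (r : FreeAlg K I →ₗ[K] FreeAlg2 K I)
    (hrone : r 1 = Finsupp.single (1, 1) 1)
    (hrtheta : ∀ i : I, r (theta i) =
      Finsupp.single (FreeMonoid.of i, 1) 1 + Finsupp.single (1, FreeMonoid.of i) 1)
    (hrmul : ∀ x y : FreeAlg K I, r (x * y) = tmul v t form (r x) (r y)) :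
    ∀ x : FreeAlg K I, r (σ x) = tensorSigma σ (twflip t form (r x)) :=
  r_sigma_general v t form σ hσone hσtheta hσmul r hrone hrtheta hrmul
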